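/- arXiv:1304.4180 — 2 statements merged into one kernel-verified Lean document; each statement's English description precedes it below -/
import Mathlib

section
/- Let 𝓟 be the generalized crested product of Markov chains (P_i)_{i∈I} on X = ∏_{i∈I} X_i associated with a finite poset (I,⪯). For each i ∈ I let A(i) = {j ∈ I : j ≻ i}, and suppose given, for each i ∈ I and each z ∈ ∏_{j∈A(i)} X_j, a partition 𝓛^i(z) of X_i such that P_i is lumpable with respect to 𝓛^i(z). Define a relation ~ on X by: x ~ y if and only if for every i ∈ I, the coordinates x_i and y_i lie in the same part of 𝓛^i(x_{A(i)}), where x_{A(i)} = (x_j)_{j∈A(i)}. Assume the compatibility condition: for every i ∈ I and z, z' ∈ ∏_{j∈A(i)} X_j, if for every j ∈ A(i) the coordinates z_j and z'_j lie in the same part of 𝓛^j(z|_{A(j)}) (note A(j) ⊆ A(i)), then 𝓛^i(z) = 𝓛^i(z'). Then ~ is an equivalence relation on X, and 𝓟 is lumpable with respect to the partition of X into the equivalence classes of ~. -/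
open scoped Classical

/-- The generalized crested product of the Markov chains `P i` on the `X i`, associated with the
finite poset `I` and the strict probability measure `p0`. -/
noncomputable def crestedProduct {I : Type*} [Fintype I] [PartialOrder I]
    (X : I → Type*) [∀ i, Fintype (X i)]
    (p0 : I → ℝ) (P : ∀ i, X i → X i → ℝ)
    (x y : ∀ i, X i) : ℝ :=
  ∑ i, p0 i * P i (x i) (y i)
    * (∏ j ∈ Finset.univ.filter (fun j => j < i), (1 / (Fintype.card (X j) : ℝ)))
    * ∏ j ∈ Finset.univ.filter (fun j => ¬ j ≤ i), (if x j = y j then (1 : ℝ) else 0)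

noncomputable def gAux {I : Type*} [PartialOrder I] (X : I → Type*)
    (P : ∀ i, X i → X i → ℝ) (i : I) (u : ∀ j, X j) (j : I) (a : X j) : ℝ :=
  if hj : j = i then P i (u i) (hj ▸ a) else if j ≤ i then 1 else if u j = a then 1 else 0

theorem gAux_self {I : Type*} [PartialOrder I] (X : I → Type*)
    (P : ∀ i, X i → X i → ℝ) (i : I) (u : ∀ j, X j) (a : X i) :
    gAux X P i u i a = P i (u i) a := dif_pos rfl

theorem gAux_lt {I : Type*} [PartialOrder I] (X : I → Type*)
    (P : ∀ i, X i → X i → ℝ) (i : I) (u : ∀ j, X j) {j : I} (hj : j ≠ i) (hle : j ≤ i)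
    (a : X j) : gAux X P i u j a = 1 := by
  rw [gAux, dif_neg hj, if_pos hle]

theorem gAux_not_le {I : Type*} [PartialOrder I] (X : I → Type*)
    (P : ∀ i, X i → X i → ℝ) (i : I) (u : ∀ j, X j) {j : I} (hj : ¬ j ≤ i)
    (a : X j) : gAux X P i u j a = if u j = a then 1 else 0 := by
  rw [gAux, dif_neg (fun h => hj h.le), if_neg hj]


/-- generalized product of lumpings: For each `i ∈ I` and each
`z ∈ ∏_{j ∈ A(i)} X j` (encoded as a full tuple `z` on which the data depends only through the
coordinates in `A(i) = {j : j ≻ i}`), let a lumping partition of `X i` be given, encoded by its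
"same part" equivalence relation `E i z` on `X i`, with respect to which `P i` is lumpable.
Assume the compatibility condition: if `z, z'` have, for each `j ∈ A(i)`, their `j`-th
coordinates in the same part of the partition `E j z` (note `A(j) ⊆ A(i)`), then
`E i z = E i z'`.  Then the relation `x ~ y ↔ ∀ i, E i x (x i) (y i)` is an equivalence
relation on `∏ i, X i`, and the generalized crested product `𝓟` is lumpable with respect to
the partition of `∏ i, X i` into its equivalence classes. -/
theorem stmt_10 {I : Type*} [Fintype I] [PartialOrder I]
    (X : I → Type*) [∀ i, Fintype (X i)]
    (hX : ∀ i, 2 ≤ Fintype.card (X i))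
    (p0 : I → ℝ) (hp0_pos : ∀ i, 0 < p0 i) (hp0_sum : ∑ i, p0 i = 1)
    (P : ∀ i, X i → X i → ℝ)
    (hP_nonneg : ∀ i, ∀ a b : X i, 0 ≤ P i a b)
    (hP_row : ∀ i, ∀ a : X i, ∑ b, P i a b = 1)
    (E : ∀ i, (∀ j, X j) → X i → X i → Prop)
    (hE_equiv : ∀ i z, Equivalence (E i z))
    (hE_dep : ∀ i, ∀ z z' : ∀ j, X j, (∀ j, i < j → z j = z' j) →
        ∀ a b : X i, E i z a b ↔ E i z' a b)
    (hE_lump : ∀ i, ∀ z : ∀ j, X j, ∀ a b : X i, E i z a b → ∀ c : X i,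
        ∑ y ∈ Finset.univ.filter (fun y => E i z c y), P i a y
        = ∑ y ∈ Finset.univ.filter (fun y => E i z c y), P i b y)
    (hcompat : ∀ i, ∀ z z' : ∀ j, X j, (∀ j, i < j → E j z (z j) (z' j)) →
        ∀ a b : X i, E i z a b ↔ E i z' a b) :
    Equivalence (fun x y : ∀ j, X j => ∀ i, E i x (x i) (y i))
    ∧
    (∀ x x' : ∀ j, X j, (∀ i, E i x (x i) (x' i)) →
      ∀ w : ∀ j, X j,
        ∑ y ∈ Finset.univ.filter (fun y : ∀ j, X j => ∀ i, E i w (w i) (y i)),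
            crestedProduct X p0 P x y
        = ∑ y ∈ Finset.univ.filter (fun y : ∀ j, X j => ∀ i, E i w (w i) (y i)),
            crestedProduct X p0 P x' y) := by
  have hsym : ∀ x x' : ∀ j, X j, (∀ i, E i x (x i) (x' i)) → ∀ i, E i x' (x' i) (x i) := by
    intro x x' h i
    have h1 : ∀ a b, E i x a b ↔ E i x' a b := hcompat i x x' (fun j _ => h j)
    exact (hE_equiv i x').symm ((h1 _ _).mp (h i))
  have htrans : ∀ x y z : ∀ j, X j, (∀ i, E i x (x i) (y i)) → (∀ i, E i y (y i) (z i)) →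
      ∀ i, E i x (x i) (z i) := by
    intro x y z hxy hyz i
    have h1 : ∀ a b, E i x a b ↔ E i y a b := hcompat i x y (fun j _ => hxy j)
    exact (hE_equiv i x).trans (hxy i) ((h1 _ _).mpr (hyz i))
  refine ⟨⟨fun x i => (hE_equiv i x).refl _, fun {x y} h => hsym x y h,
    fun {x y z} hxy hyz => htrans x y z hxy hyz⟩, ?_⟩
  intro x x' hxx' w
  have wf : WellFounded ((· > ·) : I → I → Prop) := wellFounded_gt
  have key : ∀ u : ∀ j, X j, ∀ i : I, (∀ k, i < k → E k w (w k) (u k)) →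
      ∀ a b, E i u a b ↔ E i w a b := by
    intro u i
    refine wf.induction (C := fun i => (∀ k, i < k → E k w (w k) (u k)) →
      ∀ a b, E i u a b ↔ E i w a b) i ?_
    intro i ih hk a b
    refine hcompat i u w (fun j hj => ?_) a b
    exact (ih j hj (fun k hk' => hk k (hj.trans hk')) (u j) (w j)).mpr
      ((hE_equiv j w).symm (hk j hj))
  have step : ∀ u v : ∀ j, X j, (∀ i, E i u (u i) (v i)) → ∀ i : I,
      (∀ j, ¬ j ≤ i → E j w (w j) (u j)) → ∀ j, ¬ j ≤ i → E j w (w j) (v j) := by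
    intro u v huv i hall j hj
    have hk : ∀ k, j < k → E k w (w k) (u k) :=
      fun k hk' => hall k (fun hle => hj (hk'.le.trans hle))
    exact (hE_equiv j w).trans (hall j hj) ((key u j hk _ _).mp (huv j))
  simp only [crestedProduct]
  rw [Finset.sum_comm, Finset.sum_comm (t := Finset.univ)]
  refine Finset.sum_congr rfl fun i _ => ?_
  set S : ∀ j, Finset (X j) := fun j => Finset.univ.filter (fun a => E j w (w j) a) with hS
  have hC : Finset.univ.filter (fun y : ∀ j, X j => ∀ i, E i w (w i) (y i))
      = Fintype.piFinset S := by
    ext y; simp [hS, Fintype.mem_piFinset]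
  have hfac : ∀ u y : ∀ j, X j,
      P i (u i) (y i) * ∏ j ∈ Finset.univ.filter (fun j => ¬ j ≤ i),
          (if u j = y j then (1:ℝ) else 0)
      = ∏ j, gAux X P i u j (y j) := by
    intro u y
    rw [← Finset.mul_prod_erase Finset.univ _ (Finset.mem_univ i), gAux_self]
    congr 1
    rw [Finset.prod_congr rfl (fun j hj =>
      (gAux_not_le X P i u (Finset.mem_filter.1 hj).2 (y j)).symm)]
    refine Finset.prod_subset (fun j hj => ?_) (fun j hj hj' => ?_)
    · rcases Finset.mem_filter.1 hj with ⟨_, h⟩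
      exact Finset.mem_erase.2 ⟨fun he => h (he.le), Finset.mem_univ j⟩
    · have hji : j ≤ i := by
        by_contra hji
        exact hj' (Finset.mem_filter.2 ⟨Finset.mem_univ j, hji⟩)
      exact gAux_lt X P i u (Finset.mem_erase.1 hj).1 hji (y j)
  have hresum : ∀ u : ∀ j, X j,
      ∑ y ∈ Finset.univ.filter (fun y : ∀ j, X j => ∀ i, E i w (w i) (y i)),
          P i (u i) (y i) * ∏ j ∈ Finset.univ.filter (fun j => ¬ j ≤ i),
            (if u j = y j then (1:ℝ) else 0)
      = ∏ j, ∑ a ∈ S j, gAux X P i u j a := by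
    intro u
    rw [hC, Finset.prod_univ_sum]
    exact Finset.sum_congr rfl fun y _ => hfac u y
  have hd : ∀ (j : I), ¬ j ≤ i → ∀ u : ∀ j, X j,
      ∑ a ∈ S j, gAux X P i u j a = if u j ∈ S j then (1:ℝ) else 0 := by
    intro j hj u
    rw [Finset.sum_congr rfl (fun a _ => gAux_not_le X P i u hj a)]
    exact Finset.sum_ite_eq (S j) (u j) (fun _ => 1)
  have hmain : ∏ j, ∑ a ∈ S j, gAux X P i x j a = ∏ j, ∑ a ∈ S j, gAux X P i x' j a := by
    by_cases hcase : ∀ j, ¬ j ≤ i → E j w (w j) (x j)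
    · have hcase' : ∀ j, ¬ j ≤ i → E j w (w j) (x' j) := step x x' hxx' i hcase
      refine Finset.prod_congr rfl fun j _ => ?_
      rcases eq_or_ne j i with rfl | hj
      · rw [Finset.sum_congr rfl (fun a _ => gAux_self X P j x a),
          Finset.sum_congr rfl (fun a _ => gAux_self X P j x' a)]
        have hk : ∀ k, j < k → E k w (w k) (x k) :=
          fun k hk' => hcase k (fun hle => absurd (lt_of_lt_of_le hk' hle) (lt_irrefl j))
        have hEw : E j w (x j) (x' j) := (key x j hk _ _).mp (hxx' j)
        exact hE_lump j w (x j) (x' j) hEw (w j)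
      · by_cases hji : j ≤ i
        · exact Finset.sum_congr rfl fun a _ => by
            rw [gAux_lt X P i x hj hji, gAux_lt X P i x' hj hji]
        · rw [hd j hji x, hd j hji x',
            if_pos (Finset.mem_filter.2 ⟨Finset.mem_univ _, hcase j hji⟩),
            if_pos (Finset.mem_filter.2 ⟨Finset.mem_univ _, hcase' j hji⟩)]
    · have hzero : ∀ u : ∀ j, X j, (¬ ∀ j, ¬ j ≤ i → E j w (w j) (u j)) →
          ∏ j, ∑ a ∈ S j, gAux X P i u j a = 0 := by
        intro u hu
        push_neg at hu
        obtain ⟨j, hji, hEj⟩ := hu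
        refine Finset.prod_eq_zero (Finset.mem_univ j) ?_
        rw [hd j hji u, if_neg (fun h => hEj (Finset.mem_filter.1 h).2)]
      have hcase' : ¬ ∀ j, ¬ j ≤ i → E j w (w j) (x' j) :=
        fun h => hcase (step x' x (hsym x x' hxx') i h)
      rw [hzero x hcase, hzero x' hcase']
  calc ∑ y ∈ Finset.univ.filter (fun y : ∀ j, X j => ∀ i, E i w (w i) (y i)),
        p0 i * P i (x i) (y i)
          * (∏ j ∈ Finset.univ.filter (fun j => j < i), (1 / (Fintype.card (X j) : ℝ)))
          * ∏ j ∈ Finset.univ.filter (fun j => ¬ j ≤ i), (if x j = y j then (1:ℝ) else 0)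
      = p0 i * (∏ j ∈ Finset.univ.filter (fun j => j < i), (1 / (Fintype.card (X j) : ℝ)))
          * ∑ y ∈ Finset.univ.filter (fun y : ∀ j, X j => ∀ i, E i w (w i) (y i)),
            P i (x i) (y i) * ∏ j ∈ Finset.univ.filter (fun j => ¬ j ≤ i),
              (if x j = y j then (1:ℝ) else 0) := by
        rw [Finset.mul_sum]; exact Finset.sum_congr rfl fun y _ => by ring
    _ = p0 i * (∏ j ∈ Finset.univ.filter (fun j => j < i), (1 / (Fintype.card (X j) : ℝ)))
          * ∑ y ∈ Finset.univ.filter (fun y : ∀ j, X j => ∀ i, E i w (w i) (y i)),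
            P i (x' i) (y i) * ∏ j ∈ Finset.univ.filter (fun j => ¬ j ≤ i),
              (if x' j = y j then (1:ℝ) else 0) := by
        rw [hresum x, hresum x', hmain]
    _ = ∑ y ∈ Finset.univ.filter (fun y : ∀ j, X j => ∀ i, E i w (w i) (y i)),
        p0 i * P i (x' i) (y i)
          * (∏ j ∈ Finset.univ.filter (fun j => j < i), (1 / (Fintype.card (X j) : ℝ)))
          * ∏ j ∈ Finset.univ.filter (fun j => ¬ j ≤ i), (if x' j = y j then (1:ℝ) else 0) := by
        rw [Finset.mul_sum]; exact Finset.sum_congr rfl fun y _ => by ring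
end

section
/- Let n ≥ 2 and let 𝓛 = {L_1,…,L_k} be a lumping of the Insect Markov chain on X^n. For each part L_i, let L_i' = {(x_1,…,x_{n−1}) : (x_1,…,x_n) ∈ L_i} ⊆ X^{n−1}. Then the distinct sets among L_1',…,L_k' form a partition 𝓛' of X^{n−1}, and 𝓛' is a lumping of the Insect Markov chain on X^{n−1}. -/
open scoped Classical

/-- The ultrametric distance on `X^n`:
`d(x,y) = n − max{m ∈ {0,…,n} : x 0 = y 0, …, x (m-1) = y (m-1)}`. -/
noncomputable def treeDist {X : Type*} {n : ℕ} (x y : Fin n → X) : ℕ :=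
  n - ((Finset.range (n + 1)).filter
        (fun m => ∀ i : Fin n, (i : ℕ) < m → x i = y i)).sup id

/-- The coefficients of the Insect Markov chain on the `q`-ary rooted tree of depth `n`:
`α_0 = 1`, `α_j = (q^j − 1)/(q^{j+1} − 1)` for `1 ≤ j ≤ n−1`, and `α_n = 0`. -/
noncomputable def insectAlpha (q n : ℕ) (j : ℕ) : ℝ :=
  if j = 0 then 1
  else if j ≤ n - 1 then ((q : ℝ) ^ j - 1) / ((q : ℝ) ^ (j + 1) - 1)
  else 0

/-- The transition probabilities of the Insect Markov chain on `X^n` (`q = |X|`):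
`p(x,y) = ∑_{i = max(d(x,y),1)}^{n} q^{−i} · α_1⋯α_{i−1} · (1 − α_i)`. -/
noncomputable def insectP {X : Type*} [Fintype X] {n : ℕ} (x y : Fin n → X) : ℝ :=
  ∑ i ∈ Finset.Icc (max (treeDist x y) 1) n,
    (1 / (Fintype.card X : ℝ) ^ i)
      * (∏ t ∈ Finset.Ico 1 i, insectAlpha (Fintype.card X) n t)
      * (1 - insectAlpha (Fintype.card X) n i)

/-!
Let `A σ` be the averaging operator over balls of radius `σ` in `X^N`, with `A σ = 0` for
`σ > N`. Then `A i * A j = A (max i j)`, so the differences `E τ = A τ - A (τ + 1)`,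
`0 ≤ τ ≤ N`, are complete orthogonal idempotents, and the Insect transition matrix is
`P = ∑ τ, μ τ • E τ` with strictly increasing eigenvalues `μ τ`. A partition is a lumping of `P`
iff `P` preserves the functions constant on its parts; the matrices doing so form a subalgebra,
which by Lagrange interpolation contains every `E τ` and hence every ball matrix. Hence balls of
any radius around two points of one part meet every part equally often. Radius `1` says that
the fibres of the projection `X^(n+1) → X^n` through one part meet each part equally often,
which makes the projected parts a partition; radius `t + 1` upstairs is radius `t` downstairs,
and the Insect chain on `X^n` is a combination of ball indicators, which gives the lumping.
-/

open Finset
open scoped Matrix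

section Idempotents

open Polynomial

variable {K R I : Type*} [Fintype I] {e : I → R}

theorem CompleteOrthogonalIdempotents.sum_smul_pow [CommSemiring K] [Semiring R] [Algebra K R]
    (he : CompleteOrthogonalIdempotents e) (μ : I → K) (n : ℕ) :
    (∑ i, μ i • e i) ^ n = ∑ i, μ i ^ n • e i := by
  induction n with
  | zero => simp [he.complete]
  | succ n ih =>
    rw [pow_succ, ih, sum_mul_sum]
    refine sum_congr rfl fun i _ => ?_
    simp [he.mul_eq, pow_succ', smul_smul]

theorem CompleteOrthogonalIdempotents.aeval_sum_smul [CommSemiring K] [Semiring R] [Algebra K R]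
    (he : CompleteOrthogonalIdempotents e) (μ : I → K) (p : K[X]) :
    aeval (∑ i, μ i • e i) p = ∑ i, p.eval (μ i) • e i := by
  simp only [aeval_eq_sum_range, he.sum_smul_pow, smul_sum, smul_smul, eval_eq_sum_range, sum_smul]
  exact sum_comm

theorem CompleteOrthogonalIdempotents.mem_adjoin_sum_smul [Field K] [Semiring R] [Algebra K R]
    (he : CompleteOrthogonalIdempotents e) {μ : I → K} (hμ : Function.Injective μ) (i : I) :
    e i ∈ Algebra.adjoin K {∑ j, μ j • e j} := by
  have : e i = aeval (∑ j, μ j • e j) (Lagrange.basis univ μ i) := by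
    rw [he.aeval_sum_smul, sum_eq_single i, Lagrange.eval_basis_self hμ.injOn (mem_univ i),
      one_smul]
    · intro j _ hji
      rw [Lagrange.eval_basis_of_ne hji.symm (mem_univ j), zero_smul]
    · simp
  exact this ▸ aeval_mem_adjoin_singleton K _

end Idempotents

section IdempotentChain

variable {R : Type*} [Ring R] {A : ℕ → R}

theorem mul_sub_succ_of_mul_eq_max (hA : ∀ i j, A i * A j = A (max i j)) (i τ : ℕ) :
    A i * (A τ - A (τ + 1)) = if i ≤ τ then A τ - A (τ + 1) else 0 := by
  rw [mul_sub, hA, hA]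
  split_ifs with h
  · rw [max_eq_right h, max_eq_right (by omega)]
  · rw [max_eq_left (by omega), max_eq_left (by omega), sub_self]

variable {N : ℕ}

theorem completeOrthogonalIdempotents_sub_succ (hA : ∀ i j, A i * A j = A (max i j))
    (h0 : A 0 = 1) (hN : A (N + 1) = 0) :
    CompleteOrthogonalIdempotents fun τ : Fin (N + 1) => A τ - A (τ + 1) := by
  rw [CompleteOrthogonalIdempotents.iff_ortho_complete]
  refine ⟨fun σ τ hστ => ?_, ?_⟩
  · have : (σ : ℕ) ≠ τ := Fin.val_ne_of_ne hστ
    simp only [sub_mul, mul_sub_succ_of_mul_eq_max hA]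
    split_ifs <;> first | rw [sub_self] | omega
  · rw [Fin.sum_univ_eq_sum_range (fun τ => A τ - A (τ + 1)), sum_range_sub', h0, hN, sub_zero]

theorem sum_smul_eq_sum_smul_sub_succ {K : Type*} [CommRing K] [Algebra K R]
    (hA : ∀ i j, A i * A j = A (max i j)) (h0 : A 0 = 1) (hN : A (N + 1) = 0)
    (s : Finset ℕ) (w : ℕ → K) :
    ∑ i ∈ s, w i • A i
      = ∑ τ : Fin (N + 1), (∑ i ∈ s with i ≤ (τ : ℕ), w i) • (A τ - A (τ + 1)) := by
  rw [← mul_one (∑ i ∈ s, w i • A i), ← (completeOrthogonalIdempotents_sub_succ hA h0 hN).complete,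
    mul_sum]
  refine sum_congr rfl fun τ _ => ?_
  simp only [sum_mul, smul_mul_assoc, mul_sub_succ_of_mul_eq_max hA, sum_filter, sum_smul,
    ite_smul, zero_smul, smul_ite, smul_zero]

/-- `∑ i ∈ s, w i • A i` acts on the idempotent `A τ - A (τ + 1)` by `∑ i ∈ s with i ≤ τ, w i`;
when these eigenvalues are distinct, Lagrange interpolation recovers each idempotent. -/
theorem mem_adjoin_of_mul_eq_max {K : Type*} [Field K] [Algebra K R]
    (hA : ∀ i j, A i * A j = A (max i j)) (h0 : A 0 = 1) (hN : A (N + 1) = 0)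
    {s : Finset ℕ} {w : ℕ → K}
    (hμ : Function.Injective fun τ : Fin (N + 1) => ∑ i ∈ s with i ≤ (τ : ℕ), w i) (σ : ℕ) :
    A σ ∈ Algebra.adjoin K {∑ i ∈ s, w i • A i} := by
  have he := completeOrthogonalIdempotents_sub_succ hA h0 hN
  rw [sum_smul_eq_sum_smul_sub_succ hA h0 hN, ← mul_one (A σ), ← he.complete, mul_sum]
  refine Subalgebra.sum_mem _ fun τ _ => ?_
  rw [mul_sub_succ_of_mul_eq_max hA]
  split_ifs
  · exact he.mem_adjoin_sum_smul hμ τ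
  · exact Subalgebra.zero_mem _

end IdempotentChain

section Lumping

variable {S ι : Type*} [Fintype S]

theorem sum_eq_sum_sum_parts {M : Type*} [AddCommMonoid M] [Fintype ι] {L : ι → Finset S}
    (hL : ∀ x, ∃! s, x ∈ L s) (F : S → M) : ∑ x, F x = ∑ s, ∑ x ∈ L s, F x := by
  rw [← sum_biUnion fun s _ t _ hst => disjoint_left.2 fun x hs ht => hst ((hL x).unique hs ht)]
  congr 1
  ext x
  simpa using (hL x).exists

variable [DecidableEq S] {R : Type*} [CommRing R]

def IsLumping (M : Matrix S S R) (L : ι → Finset S) : Prop :=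
  ∀ r s, ∀ x ∈ L r, ∀ x' ∈ L r, ∑ y ∈ L s, M x y = ∑ y ∈ L s, M x' y

variable (R) in
def constOnParts (L : ι → Finset S) : Submodule R (S → R) where
  carrier := {f | ∀ r, ∀ x ∈ L r, ∀ x' ∈ L r, f x = f x'}
  add_mem' hf hg r x hx x' hx' := by simp only [Pi.add_apply, hf r x hx x' hx', hg r x hx x' hx']
  zero_mem' _ _ _ _ _ := rfl
  smul_mem' c f hf r x hx x' hx' := by simp only [Pi.smul_apply, hf r x hx x' hx']

variable (R) in
def lumpingSubalgebra (L : ι → Finset S) : Subalgebra R (Matrix S S R) where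
  carrier := {M | ∀ f ∈ constOnParts R L, M *ᵥ f ∈ constOnParts R L}
  mul_mem' hM hM' f hf := by
    rw [← Matrix.mulVec_mulVec]
    exact hM _ (hM' f hf)
  add_mem' hM hM' f hf := by
    rw [Matrix.add_mulVec]
    exact add_mem (hM f hf) (hM' f hf)
  algebraMap_mem' c f hf := by
    rw [Algebra.algebraMap_eq_smul_one, Matrix.smul_mulVec, Matrix.one_mulVec]
    exact Submodule.smul_mem _ c hf

variable {L : ι → Finset S}

theorem IsLumping.mem_lumpingSubalgebra [Fintype ι] (hL : ∀ x, ∃! s, x ∈ L s)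
    {M : Matrix S S R} (hM : IsLumping M L) : M ∈ lumpingSubalgebra R L := by
  intro f hf r x hx x' hx'
  simp only [Matrix.mulVec, dotProduct, sum_eq_sum_sum_parts hL]
  refine sum_congr rfl fun s _ => ?_
  obtain hs | ⟨y₀, hy₀⟩ := (L s).eq_empty_or_nonempty
  · simp [hs]
  · have hf₀ : ∀ y ∈ L s, f y = f y₀ := fun y hy => hf s y hy y₀ hy₀
    rw [sum_congr rfl fun y hy => congrArg (M x y * ·) (hf₀ y hy), ← sum_mul,
      sum_congr rfl fun y hy => congrArg (M x' y * ·) (hf₀ y hy), ← sum_mul, hM r s x hx x' hx']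

theorem isLumping_of_mem_lumpingSubalgebra (hL : ∀ x, ∃! s, x ∈ L s) {M : Matrix S S R}
    (hM : M ∈ lumpingSubalgebra R L) : IsLumping M L := by
  intro r s x hx x' hx'
  have hind : (fun y => if y ∈ L s then 1 else 0 : S → R) ∈ constOnParts R L := by
    intro t y hy y' hy'
    have hmem : ∀ z ∈ L t, (z ∈ L s ↔ s = t) := fun z hz => ⟨fun h => (hL z).unique h hz, (· ▸ hz)⟩
    simp only [hmem y hy, hmem y' hy']
  simpa [Matrix.mulVec, dotProduct] using hM _ hind r x hx x' hx'

end Lumping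

section TreeDist

variable {X : Type*} {N : ℕ}

theorem treeDist_le_iff (x y : Fin N → X) (σ : ℕ) :
    treeDist x y ≤ σ ↔ ∀ i : Fin N, (i : ℕ) + σ < N → x i = y i := by
  set F := (range (N + 1)).filter fun m => ∀ i : Fin N, (i : ℕ) < m → x i = y i
  obtain ⟨b, hbF, hb⟩ := F.exists_mem_eq_sup ⟨0, by simp [F]⟩ id
  have hd : treeDist x y = N - b := by rw [treeDist, hb]; rfl
  rw [mem_filter, mem_range] at hbF
  refine ⟨fun h i hi => hbF.2 i (by omega), fun h => ?_⟩
  have hmem : N - σ ∈ F := mem_filter.2 ⟨mem_range.2 (by omega), fun i hi => h i (by omega)⟩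
  have := hb ▸ le_sup (f := id) hmem
  simp only [id] at this
  omega

theorem treeDist_comm (x y : Fin N → X) : treeDist x y = treeDist y x :=
  eq_of_forall_ge_iff fun σ => by simp only [treeDist_le_iff, eq_comm]

theorem treeDist_le_zero_iff {x y : Fin N → X} : treeDist x y ≤ 0 ↔ x = y := by
  rw [treeDist_le_iff]
  simp [funext_iff]

theorem treeDist_le_max {x y z : Fin N → X} {a b : ℕ} (hxy : treeDist x y ≤ a)
    (hyz : treeDist y z ≤ b) : treeDist x z ≤ max a b := by
  rw [treeDist_le_iff] at *
  intro i hi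
  exact (hxy i (by omega)).trans (hyz i (by omega))

theorem treeDist_comp_castSucc_le_iff {n : ℕ} (x y : Fin (n + 1) → X) (σ : ℕ) :
    treeDist (x ∘ Fin.castSucc) (y ∘ Fin.castSucc) ≤ σ ↔ treeDist x y ≤ σ + 1 := by
  simp only [treeDist_le_iff, Function.comp_apply]
  refine ⟨fun h i hi => ?_, fun h i hi => h i.castSucc (by simp; omega)⟩
  exact h ⟨i, by omega⟩ (by simp; omega)

theorem treeDist_le_one_iff {n : ℕ} {x y : Fin (n + 1) → X} :
    treeDist x y ≤ 1 ↔ x ∘ Fin.castSucc = y ∘ Fin.castSucc :=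
  (treeDist_comp_castSucc_le_iff x y 0).symm.trans treeDist_le_zero_iff

variable [Fintype X]

theorem card_filter_treeDist_le (x : Fin N → X) {σ : ℕ} (hσ : σ ≤ N) :
    #{y | treeDist x y ≤ σ} = Fintype.card X ^ σ := by
  rw [show Fintype.card X ^ σ = #(univ : Finset (Fin σ → X)) by simp]
  -- a point of the ball is `x` on the first `N - σ` letters and free on the last `σ`
  refine card_nbij' (fun y b => y ⟨N - σ + b, by omega⟩)
    (fun g a => if h : (a : ℕ) + σ < N then x a else g ⟨a - (N - σ), by omega⟩)
    (fun _ _ => mem_coe.2 (mem_univ _)) (fun g _ => ?_) (fun y hy => ?_) (fun g _ => ?_)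
  · simp only [coe_filter, Set.mem_ofPred_eq, treeDist_le_iff]
    exact ⟨mem_univ _, fun i hi => by simp [hi]⟩
  · simp only [coe_filter, Set.mem_ofPred_eq, treeDist_le_iff] at hy
    funext a
    dsimp only
    split_ifs with h
    · exact hy.2 a h
    · congr 1; ext; simp; omega
  · funext b
    simp only [show ¬ (N - σ + b + σ < N) by omega, dite_false]
    congr 1; ext; simp

theorem card_filter_treeDist_le_and (x z : Fin N → X) {a b : ℕ} (ha : a ≤ N) (hb : b ≤ N) :
    #{y | treeDist x y ≤ a ∧ treeDist y z ≤ b}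
      = if treeDist x z ≤ max a b then Fintype.card X ^ min a b else 0 := by
  wlog hab : a ≤ b generalizing x z a b
  · have := this z x hb ha (by omega)
    rw [max_comm, min_comm, treeDist_comm z x] at this
    rw [← this]
    congr 1; ext y
    simp only [mem_filter, mem_univ, true_and]
    rw [treeDist_comm z y, treeDist_comm y x, and_comm]
  rw [max_eq_right hab, min_eq_left hab]
  split_ifs with hxz
  · rw [← card_filter_treeDist_le x (hab.trans hb)]
    congr 1
    refine filter_congr fun y _ => and_iff_left_of_imp fun hxy => ?_
    exact max_eq_right hab ▸ treeDist_le_max (treeDist_comm x y ▸ hxy) hxz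
  · refine card_eq_zero.2 (filter_eq_empty_iff.2 fun y _ ⟨hxy, hyz⟩ => hxz ?_)
    exact max_eq_right hab ▸ treeDist_le_max hxy hyz

end TreeDist

section BallMatrix

variable {X : Type*} {N : ℕ}

noncomputable def ballMatrix (σ : ℕ) : Matrix (Fin N → X) (Fin N → X) ℝ :=
  Matrix.of fun x y => if treeDist x y ≤ σ then 1 else 0

theorem ballMatrix_zero : (ballMatrix 0 : Matrix (Fin N → X) (Fin N → X) ℝ) = 1 := by
  ext x y
  simp only [ballMatrix, Matrix.of_apply, Matrix.one_apply, treeDist_le_zero_iff]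

variable [Fintype X]

theorem ballMatrix_mul {a b : ℕ} (ha : a ≤ N) (hb : b ≤ N) :
    (ballMatrix a * ballMatrix b : Matrix (Fin N → X) (Fin N → X) ℝ)
      = (Fintype.card X ^ min a b : ℝ) • ballMatrix (max a b) := by
  ext x z
  simp only [Matrix.mul_apply, ballMatrix, Matrix.of_apply, Matrix.smul_apply, boole_mul,
    ← ite_and, sum_boole]
  rw [card_filter_treeDist_le_and x z ha hb]
  split_ifs <;> simp

/-- Extended by `0` beyond the depth `N`, so that `avgMatrix_mul` holds for all radii. -/
noncomputable def avgMatrix (σ : ℕ) : Matrix (Fin N → X) (Fin N → X) ℝ :=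
  if σ ≤ N then ((Fintype.card X : ℝ) ^ σ)⁻¹ • ballMatrix σ else 0

theorem avgMatrix_zero : (avgMatrix 0 : Matrix (Fin N → X) (Fin N → X) ℝ) = 1 := by
  simp [avgMatrix, ballMatrix_zero]

theorem avgMatrix_of_lt {σ : ℕ} (hσ : N < σ) :
    (avgMatrix σ : Matrix (Fin N → X) (Fin N → X) ℝ) = 0 := by
  simp [avgMatrix, hσ.not_ge]

theorem avgMatrix_mul [Nonempty X] (i j : ℕ) :
    (avgMatrix i * avgMatrix j : Matrix (Fin N → X) (Fin N → X) ℝ) = avgMatrix (max i j) := by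
  have hq : (Fintype.card X : ℝ) ≠ 0 := by positivity
  by_cases hij : max i j ≤ N
  · obtain ⟨hi, hj⟩ := max_le_iff.1 hij
    rw [avgMatrix, avgMatrix, avgMatrix, if_pos hi, if_pos hj, if_pos hij, smul_mul_smul_comm,
      ballMatrix_mul hi hj, smul_smul]
    congr 1
    rcases le_total i j with h | h
    · simp only [min_eq_left h, max_eq_right h]; field_simp
    · simp only [min_eq_right h, max_eq_left h]; field_simp
  · rw [avgMatrix_of_lt (not_le.1 hij)]
    rcases lt_max_iff.1 (not_le.1 hij) with h | h <;> simp [avgMatrix_of_lt h]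

end BallMatrix

section InsectCoeff

noncomputable def insectCoeff (q N i : ℕ) : ℝ :=
  (1 / (q : ℝ) ^ i) * (∏ t ∈ Ico 1 i, insectAlpha q N t) * (1 - insectAlpha q N i)

variable {q N : ℕ}

theorem insectAlpha_pos (hq : 2 ≤ q) {t : ℕ} (ht : t ≤ N - 1) : 0 < insectAlpha q N t := by
  have hq1 : (1 : ℝ) < q := by exact_mod_cast hq
  unfold insectAlpha
  split_ifs with h0
  · exact one_pos
  · have := one_lt_pow₀ hq1 (n := t) h0
    have := one_lt_pow₀ hq1 (n := t + 1) (by omega)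
    exact div_pos (by linarith) (by linarith)

theorem insectAlpha_lt_one (hq : 2 ≤ q) {t : ℕ} (ht : 1 ≤ t) : insectAlpha q N t < 1 := by
  have hq1 : (1 : ℝ) < q := by exact_mod_cast hq
  rw [insectAlpha, if_neg (by omega)]
  split_ifs
  · have := one_lt_pow₀ hq1 (n := t + 1) (by omega)
    have : (q : ℝ) ^ t < q ^ (t + 1) := pow_lt_pow_right₀ hq1 (by omega)
    rw [div_lt_one (by linarith)]
    linarith
  · exact one_pos

theorem insectCoeff_pos (hq : 2 ≤ q) {i : ℕ} (hi : i ∈ Icc 1 N) : 0 < insectCoeff q N i := by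
  rw [mem_Icc] at hi
  have := insectAlpha_lt_one (N := N) hq hi.1
  have : 0 < ∏ t ∈ Ico 1 i, insectAlpha q N t :=
    prod_pos fun t ht => insectAlpha_pos hq (by simp at ht; omega)
  unfold insectCoeff
  have : (0 : ℝ) < q := by exact_mod_cast (by omega : 0 < q)
  positivity

end InsectCoeff

section InsectMatrix

variable {X : Type*} [Fintype X] {N : ℕ}

theorem insectP_eq_sum (x y : Fin N → X) :
    insectP x y = ∑ i ∈ Icc 1 N,
      if treeDist x y ≤ i then insectCoeff (Fintype.card X) N i else 0 := by
  rw [insectP, ← sum_filter]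
  congr 1
  ext i
  simp only [mem_Icc, mem_filter]
  omega

theorem sum_insectP_eq {S : Type*} (x : Fin N → X) (A : Finset S) (g : S → Fin N → X) :
    ∑ y ∈ A, insectP x (g y)
      = ∑ i ∈ Icc 1 N, insectCoeff (Fintype.card X) N i * #{y ∈ A | treeDist x (g y) ≤ i} := by
  simp only [insectP_eq_sum]
  rw [sum_comm]
  refine sum_congr rfl fun i _ => ?_
  rw [sum_ite, sum_const_zero, add_zero, sum_const, nsmul_eq_mul, mul_comm]

theorem insectMatrix_eq_sum_avgMatrix [Nonempty X] :
    (Matrix.of insectP : Matrix (Fin N → X) (Fin N → X) ℝ)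
      = ∑ i ∈ Icc 1 N, (insectCoeff (Fintype.card X) N i * Fintype.card X ^ i) • avgMatrix i := by
  ext x y
  rw [Matrix.of_apply, insectP_eq_sum, Matrix.sum_apply]
  refine sum_congr rfl fun i hi => ?_
  rw [avgMatrix, if_pos (mem_Icc.1 hi).2, smul_smul, Matrix.smul_apply, ballMatrix, Matrix.of_apply]
  have : (Fintype.card X : ℝ) ^ i ≠ 0 := by positivity
  rw [mul_inv_cancel_right₀ this, smul_ite, smul_eq_mul, mul_one, smul_zero]

end InsectMatrix

section InsectLumping

variable {X ι : Type*} [Fintype X] [Fintype ι] {N : ℕ} {L : ι → Finset (Fin N → X)}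

theorem strictMono_sum_insectCoeff (hq : 2 ≤ Fintype.card X) :
    StrictMono fun τ : Fin (N + 1) =>
      ∑ i ∈ Icc 1 N with i ≤ (τ : ℕ), insectCoeff (Fintype.card X) N i * Fintype.card X ^ i := by
  intro σ τ hστ
  have hστ : (σ : ℕ) < τ := hστ
  have hpos : ∀ i ∈ Icc 1 N, 0 < insectCoeff (Fintype.card X) N i * Fintype.card X ^ i :=
    fun i hi => mul_pos (insectCoeff_pos hq hi) (by positivity)
  refine sum_lt_sum_of_subset (i := τ)
    (fun i hi => mem_filter.2 ⟨(mem_filter.1 hi).1, (mem_filter.1 hi).2.trans hστ.le⟩) ?_ ?_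
    (hpos τ ?_) fun i hi _ => (hpos i (mem_filter.1 hi).1).le
  · simp only [mem_filter, mem_Icc]; omega
  · simp only [mem_filter]; omega
  · simp only [mem_Icc]; omega

theorem ballMatrix_mem_lumpingSubalgebra (hq : 2 ≤ Fintype.card X) (hL : ∀ x, ∃! s, x ∈ L s)
    (hlump : IsLumping (Matrix.of insectP) L) {σ : ℕ} (hσ : σ ≤ N) :
    ballMatrix σ ∈ lumpingSubalgebra ℝ L := by
  have : Nonempty X := Fintype.card_pos_iff.1 (by omega)
  have hadj : Algebra.adjoin ℝ {Matrix.of insectP} ≤ lumpingSubalgebra ℝ L :=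
    Algebra.adjoin_le (Set.singleton_subset_iff.2 (hlump.mem_lumpingSubalgebra hL))
  have havg : avgMatrix σ ∈ lumpingSubalgebra ℝ L := by
    refine hadj ?_
    rw [insectMatrix_eq_sum_avgMatrix]
    exact mem_adjoin_of_mul_eq_max avgMatrix_mul avgMatrix_zero (avgMatrix_of_lt N.lt_succ_self)
      (strictMono_sum_insectCoeff hq).injective σ
  have hq₀ : (Fintype.card X : ℝ) ^ σ ≠ 0 := by positivity
  rw [avgMatrix, if_pos hσ] at havg
  simpa [smul_smul, hq₀] using Subalgebra.smul_mem _ havg ((Fintype.card X : ℝ) ^ σ)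

theorem card_filter_treeDist_le_eq (hq : 2 ≤ Fintype.card X) (hL : ∀ x, ∃! s, x ∈ L s)
    (hlump : IsLumping (Matrix.of insectP) L) {σ : ℕ} (hσ : σ ≤ N) {r : ι} (s : ι)
    {x x' : Fin N → X} (hx : x ∈ L r) (hx' : x' ∈ L r) :
    #{y ∈ L s | treeDist x y ≤ σ} = #{y ∈ L s | treeDist x' y ≤ σ} := by
  have := isLumping_of_mem_lumpingSubalgebra hL
    (ballMatrix_mem_lumpingSubalgebra hq hL hlump hσ) r s x hx x' hx'
  simpa [ballMatrix, sum_boole] using this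

end InsectLumping

section Image

variable {S T ι : Type*} [DecidableEq T] {L : ι → Finset S} {g : S → T}

theorem image_subset_image_of_not_disjoint
    (hfib : ∀ r s, ∀ x ∈ L r, ∀ x' ∈ L r, #{y ∈ L s | g y = g x} = #{y ∈ L s | g y = g x'})
    {i j : ι} (h : ¬ Disjoint ((L i).image g) ((L j).image g)) :
    (L i).image g ⊆ (L j).image g := by
  obtain ⟨_, hxi, hxj⟩ := not_disjoint_iff.1 h
  obtain ⟨x, hx, rfl⟩ := mem_image.1 hxi
  obtain ⟨z, hz, hzx⟩ := mem_image.1 hxj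
  intro w hw
  obtain ⟨x', hx', rfl⟩ := mem_image.1 hw
  have hpos : 0 < #{y ∈ L j | g y = g x'} :=
    hfib i j x hx x' hx' ▸ card_pos.2 ⟨z, mem_filter.2 ⟨hz, hzx⟩⟩
  obtain ⟨y, hy⟩ := card_pos.1 hpos
  exact mem_image.2 ⟨y, (mem_filter.1 hy).1, (mem_filter.1 hy).2⟩

theorem image_eq_or_disjoint_of_card_fiber_eq
    (hfib : ∀ r s, ∀ x ∈ L r, ∀ x' ∈ L r, #{y ∈ L s | g y = g x} = #{y ∈ L s | g y = g x'})
    (i j : ι) : (L i).image g = (L j).image g ∨ Disjoint ((L i).image g) ((L j).image g) := by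
  by_cases h : Disjoint ((L i).image g) ((L j).image g)
  · exact Or.inr h
  · exact Or.inl (image_subset_image_of_not_disjoint hfib h
      |>.antisymm (image_subset_image_of_not_disjoint hfib fun h' => h h'.symm))

theorem sum_image_eq_of_card_fiber_eq {K : Type*} [Field K] [CharZero K] {f : T → T → K}
    (hfib : ∀ r s, ∀ x ∈ L r, ∀ x' ∈ L r, #{y ∈ L s | g y = g x} = #{y ∈ L s | g y = g x'})
    (hrow : ∀ r s, ∀ x ∈ L r, ∀ x' ∈ L r, ∑ y ∈ L s, f (g x) (g y) = ∑ y ∈ L s, f (g x') (g y))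
    (i j : ι) : ∀ w ∈ (L i).image g, ∀ w' ∈ (L i).image g,
      ∑ u ∈ (L j).image g, f w u = ∑ u ∈ (L j).image g, f w' u := by
  intro w hw w' hw'
  obtain ⟨x, hx, rfl⟩ := mem_image.1 hw
  obtain ⟨x', hx', rfl⟩ := mem_image.1 hw'
  obtain hj | ⟨z, hz⟩ := (L j).eq_empty_or_nonempty
  · simp [hj]
  -- all fibres of `g` in `L j` have the size of the fibre through `z`
  have hsum : ∀ v, ∑ y ∈ L j, f v (g y) = #{y ∈ L j | g y = g z} * ∑ u ∈ (L j).image g, f v u := by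
    intro v
    rw [Finset.sum_comp, mul_sum]
    refine sum_congr rfl fun u hu => ?_
    obtain ⟨y, hy, rfl⟩ := mem_image.1 hu
    rw [hfib j j y hy z hz, nsmul_eq_mul]
  have hc : 0 < #{y ∈ L j | g y = g z} := card_pos.2 ⟨z, mem_filter.2 ⟨hz, rfl⟩⟩
  have := hrow i j x hx x' hx'
  rwa [hsum, hsum, mul_right_inj' (Nat.cast_ne_zero.2 hc.ne')] at this

end Image

theorem stmt_14_general {X : Type*} [Fintype X] {n k : ℕ}
    (hq : 2 ≤ Fintype.card X)
    (L : Fin k → Finset (Fin (n + 1) → X))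
    (hL_part : ∀ x : Fin (n + 1) → X, ∃! s, x ∈ L s)
    (hlump : ∀ r s : Fin k, ∀ x ∈ L r, ∀ x' ∈ L r,
        ∑ y ∈ L s, insectP x y = ∑ y ∈ L s, insectP x' y) :
    -- the sets L i' cover X^n
    (∀ w : Fin n → X, ∃ i : Fin k, w ∈ (L i).image (fun v => v ∘ Fin.castSucc))
    ∧
    -- any two of them are equal or disjoint
    (∀ i j : Fin k,
      (L i).image (fun v => v ∘ Fin.castSucc) = (L j).image (fun v => v ∘ Fin.castSucc)
      ∨ Disjoint ((L i).image (fun v => v ∘ Fin.castSucc))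
          ((L j).image (fun v => v ∘ Fin.castSucc)))
    ∧
    -- the partition they form is a lumping of the Insect Markov chain on X^n
    (∀ i j : Fin k,
      ∀ w ∈ (L i).image (fun v => v ∘ Fin.castSucc),
      ∀ w' ∈ (L i).image (fun v => v ∘ Fin.castSucc),
        ∑ u ∈ (L j).image (fun v => v ∘ Fin.castSucc), insectP w u
        = ∑ u ∈ (L j).image (fun v => v ∘ Fin.castSucc), insectP w' u) := by
  have : Nonempty X := Fintype.card_pos_iff.1 (by omega)
  have hball {σ : ℕ} (hσ : σ ≤ n + 1) (r s : Fin k) (x : Fin (n + 1) → X) (hx : x ∈ L r)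
      (x' : Fin (n + 1) → X) (hx' : x' ∈ L r) :=
    card_filter_treeDist_le_eq hq hL_part hlump hσ s hx hx'
  have hfib : ∀ r s, ∀ x ∈ L r, ∀ x' ∈ L r, #{y ∈ L s | y ∘ Fin.castSucc = x ∘ Fin.castSucc}
      = #{y ∈ L s | y ∘ Fin.castSucc = x' ∘ Fin.castSucc} := by
    intro r s x hx x' hx'
    simpa only [treeDist_le_one_iff, eq_comm] using hball le_add_self r s x hx x' hx'
  refine ⟨fun w => ?_, image_eq_or_disjoint_of_card_fiber_eq hfib,
    sum_image_eq_of_card_fiber_eq hfib ?_⟩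
  · obtain ⟨i, hi, -⟩ := hL_part (Fin.snoc w (Classical.arbitrary X))
    exact ⟨i, mem_image.2 ⟨_, hi, by simp⟩⟩
  · intro r s x hx x' hx'
    simp only [sum_insectP_eq, treeDist_comp_castSucc_le_iff]
    refine sum_congr rfl fun i hi => ?_
    rw [hball (by simp at hi; omega) r s x hx x' hx']

/-- Let `𝓛 = {L_1,…,L_k}` be a lumping of the Insect Markov chain on `X^{n+1}`
(depth `n + 1 ≥ 2`), and let `L i' ⊆ X^n` be obtained from `L i` by deleting the last letter.
Then the distinct sets among the `L i'` form a partition `𝓛'` of `X^n` (they cover `X^n` and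
any two of them are equal or disjoint), and `𝓛'` is a lumping of the Insect Markov chain
on `X^n`. -/
theorem stmt_14 {X : Type*} [Fintype X] {n k : ℕ}
    (hq : 2 ≤ Fintype.card X) (hn : 1 ≤ n)
    (L : Fin k → Finset (Fin (n + 1) → X))
    (hL_nonempty : ∀ s, (L s).Nonempty)
    (hL_part : ∀ x : Fin (n + 1) → X, ∃! s, x ∈ L s)
    (hlump : ∀ r s : Fin k, ∀ x ∈ L r, ∀ x' ∈ L r,
        ∑ y ∈ L s, insectP x y = ∑ y ∈ L s, insectP x' y) :
    -- the sets L i' cover X^n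
    (∀ w : Fin n → X, ∃ i : Fin k, w ∈ (L i).image (fun v => v ∘ Fin.castSucc))
    ∧
    -- any two of them are equal or disjoint
    (∀ i j : Fin k,
      (L i).image (fun v => v ∘ Fin.castSucc) = (L j).image (fun v => v ∘ Fin.castSucc)
      ∨ Disjoint ((L i).image (fun v => v ∘ Fin.castSucc))
          ((L j).image (fun v => v ∘ Fin.castSucc)))
    ∧
    -- the partition they form is a lumping of the Insect Markov chain on X^n
    (∀ i j : Fin k,
      ∀ w ∈ (L i).image (fun v => v ∘ Fin.castSucc),
      ∀ w' ∈ (L i).image (fun v => v ∘ Fin.castSucc),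
        ∑ u ∈ (L j).image (fun v => v ∘ Fin.castSucc), insectP w u
        = ∑ u ∈ (L j).image (fun v => v ∘ Fin.castSucc), insectP w' u) :=
  stmt_14_general hq L hL_part hlump
end
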